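/- arXiv:1709.09287 — 2 statements merged into one kernel-verified Lean document; each statement's English description precedes it below -/
import Mathlib

section
/- Suppose a region r_opt is covered by the union of four cells c₁, c₂, c₃, c₄, the burst score satisfies S(∪ᵢ cᵢ) ≥ (1−α)·S(r_opt) (by the inclusion lemma), S(∪ᵢ cᵢ) ≤ Σᵢ S(cᵢ) (by subadditivity over the overlapping decomposition), and the returned region r satisfies S(r) ≥ S(cᵢ) for all i. Then S(r) ≥ ((1−α)/4)·S(r_opt). -/
theorem grid_approx_from_cover
    (α : ℝ) (hα0 : 0 ≤ α) (hα1 : α < 1)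
    (Sopt Sunion s₁ s₂ s₃ s₄ s : ℝ)
    (hSopt : 0 ≤ Sopt) (hs₁ : 0 ≤ s₁) (hs₂ : 0 ≤ s₂) (hs₃ : 0 ≤ s₃) (hs₄ : 0 ≤ s₄)
    (hincl : Sunion ≥ (1 - α) * Sopt)
    (hsub : Sunion ≤ s₁ + s₂ + s₃ + s₄)
    (hr₁ : s ≥ s₁) (hr₂ : s ≥ s₂) (hr₃ : s ≥ s₃) (hr₄ : s ≥ s₄) :
    s ≥ (1 - α) / 4 * Sopt := by nlinarith
end

section
/- Candidate point validity for a grown event: let p* maximize the burst score S among points of a cell c. If a rectangle object g moves from the current to the past window and g does not cover p*, then p* still maximizes the burst score in c after the event. -/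
/-- Candidate point validity for a grown event. -/
theorem candidate_point_valid_grown_event
    {P : Type*} (α w Tc Tp : ℝ) (hα0 : 0 ≤ α) (hα1 : α < 1)
    (hw : 0 ≤ w) (hTc : 0 < Tc) (hTp : 0 < Tp)
    (fc fp fc' fp' : P → ℝ) (covered : P → Prop)
    (hfc : ∀ p, 0 ≤ fc p) (hfp : ∀ p, 0 ≤ fp p)
    (hcontrib : ∀ p, covered p → w / Tc ≤ fc p)
    (hcov : ∀ p, covered p → fc' p = fc p - w / Tc ∧ fp' p = fp p + w / Tp)
    (hncov : ∀ p, ¬covered p → fc' p = fc p ∧ fp' p = fp p)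
    (pstar : P)
    (hmax : ∀ p, α * max (fc p - fp p) 0 + (1 - α) * fc p ≤
      α * max (fc pstar - fp pstar) 0 + (1 - α) * fc pstar)
    (hnstar : ¬covered pstar) :
    ∀ p, α * max (fc' p - fp' p) 0 + (1 - α) * fc' p ≤
      α * max (fc' pstar - fp' pstar) 0 + (1 - α) * fc' pstar := by
  intro p
  obtain ⟨hs1, hs2⟩ := hncov pstar hnstar
  rw [hs1, hs2]
  refine le_trans ?_ (hmax p)
  by_cases hp : covered p
  · obtain ⟨h1, h2⟩ := hcov p hp
    rw [h1, h2]
    have hwTc : 0 ≤ w / Tc := div_nonneg hw hTc.le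
    have hwTp : 0 ≤ w / Tp := div_nonneg hw hTp.le
    have hmx : max (fc p - w / Tc - (fp p + w / Tp)) 0 ≤ max (fc p - fp p) 0 :=
      max_le_max (by linarith) le_rfl
    have h1a : 1 - α ≥ 0 := by linarith
    nlinarith [mul_le_mul_of_nonneg_left hmx hα0]
  · obtain ⟨h1, h2⟩ := hncov p hp
    rw [h1, h2]
end
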